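/- arXiv:2505.17531 — 2 statements merged into one kernel-verified Lean document; each statement's English description precedes it below -/
import Mathlib

section
/- There is no full-length 4-divisible binary linear code of effective length 9. Consequently, an 8-divisible binary linear code of full effective length 65 contains no codeword of weight 56. -/
open Finset

/-- Hamming weight of a binary word. -/
def wt {n : ℕ} (x : Fin n → ZMod 2) : ℕ := hammingNorm x

/-- The dual code of a binary linear code. -/
def dualCode {n : ℕ} (C : Submodule (ZMod 2) (Fin n → ZMod 2)) :
    Submodule (ZMod 2) (Fin n → ZMod 2) where
  carrier := {x | ∀ c ∈ C, ∑ i, x i * c i = 0}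
  zero_mem' := by intro c _; simp
  add_mem' := by
    intro a b ha hb c hc
    have h : ∑ i, (a + b) i * c i = (∑ i, a i * c i) + ∑ i, b i * c i := by
      rw [← Finset.sum_add_distrib]
      exact Finset.sum_congr rfl fun i _ => by simp [add_mul]
    simp only [Set.mem_setOf_eq] at *
    rw [h, ha c hc, hb c hc, add_zero]
  smul_mem' := by
    intro r a ha c hc
    have h : ∑ i, (r • a) i * c i = r * ∑ i, a i * c i := by
      rw [Finset.mul_sum]
      exact Finset.sum_congr rfl fun i _ => by simp [mul_assoc]
    simp only [Set.mem_setOf_eq] at *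
    rw [h, ha c hc, mul_zero]

/-- A code has full (effective) length if every coordinate is in the support of
some codeword. -/
def FullLength {n : ℕ} (C : Submodule (ZMod 2) (Fin n → ZMod 2)) : Prop :=
  ∀ i : Fin n, ∃ c ∈ C, c i ≠ 0

/-- The weight distribution: `wd C i` is the number of codewords of `C` of weight `i`. -/
noncomputable def wd {n : ℕ} (C : Submodule (ZMod 2) (Fin n → ZMod 2)) (i : ℕ) : ℕ :=
  Nat.card {c : Fin n → ZMod 2 // c ∈ C ∧ wt c = i}

/-!
Each coordinate of a full-length binary code is nonzero in exactly half of its codewords, so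
`2 ∑_{c ∈ C} wt c = n |C|`. For `n = 9` and a 4-divisible code this is impossible: two codewords
of weight 8 would differ in at most two places, so pairing `c` with `c + u`, where `u` is the
weight-8 codeword if there is one and `u = 0` otherwise, gives `wt c + wt (c + u) ≤ 8`, and
averaging yields `2 ∑ wt c ≤ 8 |C| < 9 |C|`.

If `C` is 8-divisible and `c ∈ C`, every `d ∈ C` meets the support of `c` in a multiple of 4
coordinates, so the residual code `Res(C;c)` is 4-divisible, and it is full length with
effective length `65 - wt c`; hence `wt c = 56` is excluded by the first part.
-/

section Weight

variable {n : ℕ}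

lemma wt_eq_card (x : Fin n → ZMod 2) : wt x = #{i | x i ≠ 0} := rfl

lemma wt_le (x : Fin n → ZMod 2) : wt x ≤ n := by
  simpa [wt] using hammingNorm_le_card_fintype (x := x)

lemma wt_add_add_two_mul_card_inter (x y : Fin n → ZMod 2) :
    wt (x + y) + 2 * #{i | x i ≠ 0 ∧ y i ≠ 0} = wt x + wt y := by
  simp only [wt_eq_card, card_filter, mul_sum, ← sum_add_distrib]
  refine sum_congr rfl fun i _ => ?_
  rw [Pi.add_apply]
  generalize x i = a, y i = b
  revert a b
  decide

lemma wt_add_add_wt_add_wt_le (x y : Fin n → ZMod 2) :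
    wt (x + y) + wt x + wt y ≤ 2 * n := by
  -- the left side is twice the size of the union of the supports of `x` and `y`
  have hunion := card_union_add_card_inter (univ.filter (x · ≠ 0)) (univ.filter (y · ≠ 0))
  have hle := card_le_univ (univ.filter (x · ≠ 0) ∪ univ.filter (y · ≠ 0))
  rw [← filter_and, Fintype.card_fin] at *
  have := wt_add_add_two_mul_card_inter x y
  simp only [wt_eq_card] at this ⊢
  omega

end Weight

section Counting

open scoped Classical

variable {n : ℕ} {C : Submodule (ZMod 2) (Fin n → ZMod 2)}

lemma two_mul_card_filter_ne_zero (hC : FullLength C) (i : Fin n) :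
    2 * #{c : C | (c : Fin n → ZMod 2) i ≠ 0} = Fintype.card C := by
  obtain ⟨e, he, hei⟩ := hC i
  have hflip : ∀ a b : ZMod 2, b ≠ 0 → (a ≠ 0 ↔ a + b = 0) := by decide
  have hswap : #{c : C | (c : Fin n → ZMod 2) i ≠ 0} = #{c : C | ¬(c : Fin n → ZMod 2) i ≠ 0} :=
    card_equiv (Equiv.addRight ⟨e, he⟩) fun c => by
      simp only [mem_filter, mem_univ, true_and, Equiv.coe_addRight, Submodule.coe_add,
        Pi.add_apply, not_not]
      exact hflip _ _ hei
  rw [two_mul]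
  nth_rw 2 [hswap]
  rw [card_filter_add_card_filter_not, card_univ]

lemma sum_wt_eq_sum_card_filter_ne_zero :
    ∑ c : C, wt (c : Fin n → ZMod 2) = ∑ i, #{c : C | (c : Fin n → ZMod 2) i ≠ 0} :=
  sum_card_bipartiteAbove_eq_sum_card_bipartiteBelow (s := univ) (t := univ)
    fun (c : C) i => (c : Fin n → ZMod 2) i ≠ 0

lemma two_mul_sum_wt (hC : FullLength C) :
    2 * ∑ c : C, wt (c : Fin n → ZMod 2) = n * Fintype.card C := by
  rw [sum_wt_eq_sum_card_filter_ne_zero, mul_sum,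
    sum_congr rfl fun i _ => two_mul_card_filter_ne_zero hC i]
  simp

lemma sum_wt_add_right {u : Fin n → ZMod 2} (hu : u ∈ C) :
    ∑ c : C, wt ((c : Fin n → ZMod 2) + u) = ∑ c : C, wt (c : Fin n → ZMod 2) :=
  Fintype.sum_equiv (Equiv.addRight ⟨u, hu⟩) _ _ fun _ => rfl

lemma not_fullLength_of_wt_add_wt_add_le {k : ℕ} (hk : k < n) {u : Fin n → ZMod 2}
    (hu : u ∈ C) (hle : ∀ c ∈ C, wt c + wt (c + u) ≤ k) : ¬FullLength C := by
  intro hC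
  have hmul : n * Fintype.card C ≤ k * Fintype.card C :=
    calc n * Fintype.card C = 2 * ∑ c : C, wt (c : Fin n → ZMod 2) := (two_mul_sum_wt hC).symm
      _ = ∑ c : C, (wt (c : Fin n → ZMod 2) + wt ((c : Fin n → ZMod 2) + u)) := by
        rw [sum_add_distrib, sum_wt_add_right hu, two_mul]
      _ ≤ ∑ _c : C, k := sum_le_sum fun c _ => hle c c.2
      _ = k * Fintype.card C := by simp [mul_comm]
  exact hk.not_ge (Nat.le_of_mul_le_mul_right hmul Fintype.card_pos)

end Counting

theorem not_fullLength_nine_of_four_dvd_wt (C : Submodule (ZMod 2) (Fin 9 → ZMod 2))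
    (hdiv : ∀ c ∈ C, 4 ∣ wt c) : ¬FullLength C := by
  by_cases h8 : ∃ u ∈ C, wt u = 8
  · obtain ⟨u, hu, hu8⟩ := h8
    refine not_fullLength_of_wt_add_wt_add_le (k := 8) (by norm_num) hu fun c hc => ?_
    have htri := wt_add_add_wt_add_wt_le c (c + u)
    rw [← add_assoc, CharTwo.add_self_eq_zero, zero_add] at htri
    have := hdiv c hc
    have := hdiv _ (C.add_mem hc hu)
    omega
  · simp only [not_exists, not_and] at h8
    refine not_fullLength_of_wt_add_wt_add_le (k := 8) (by norm_num) C.zero_mem fun c hc => ?_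
    have := hdiv c hc
    have := h8 c hc
    have := wt_le c
    rw [add_zero]
    omega

section Residual

variable {n m : ℕ}

def zeroSet (c : Fin n → ZMod 2) : Finset (Fin n) := {i | c i = 0}

lemma card_zeroSet_add_wt (c : Fin n → ZMod 2) : #(zeroSet c) + wt c = n := by
  rw [zeroSet, wt_eq_card]
  simpa using card_filter_add_card_filter_not (s := univ) (p := (c · = 0))

/-- `Res(C;c)`: the restriction of `C` to the coordinates outside the support of `c`. -/
def residualCode (C : Submodule (ZMod 2) (Fin n → ZMod 2)) (c : Fin n → ZMod 2)
    (hm : #(zeroSet c) = m) : Submodule (ZMod 2) (Fin m → ZMod 2) :=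
  C.map (LinearMap.funLeft (ZMod 2) (ZMod 2) ((zeroSet c).orderEmbOfFin hm))

lemma FullLength.residualCode {C : Submodule (ZMod 2) (Fin n → ZMod 2)} (hC : FullLength C)
    (c : Fin n → ZMod 2) (hm : #(zeroSet c) = m) : FullLength (residualCode C c hm) := fun j => by
  obtain ⟨d, hd, hdj⟩ := hC ((zeroSet c).orderEmbOfFin hm j)
  exact ⟨_, Submodule.mem_map_of_mem hd, hdj⟩

lemma wt_comp_orderEmbOfFin (s : Finset (Fin n)) (hs : #s = m) (d : Fin n → ZMod 2) :
    wt (d ∘ s.orderEmbOfFin hs) = #{i ∈ s | d i ≠ 0} := by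
  rw [wt_eq_card]
  refine card_nbij (s.orderEmbOfFin hs) (fun j hj => ?_) (s.orderEmbOfFin hs).injective.injOn
    fun i hi => ?_
  · simpa [orderEmbOfFin_mem] using hj
  · obtain ⟨his, hdi⟩ := mem_filter.mp hi
    rw [← Finset.mem_coe, ← range_orderEmbOfFin s hs] at his
    obtain ⟨j, rfl⟩ := his
    exact ⟨j, by simpa using hdi, rfl⟩

lemma dvd_wt_of_mem_residualCode {C : Submodule (ZMod 2) (Fin n → ZMod 2)} {k : ℕ}
    (hdiv : ∀ d ∈ C, 2 * k ∣ wt d) {c : Fin n → ZMod 2} (hc : c ∈ C) (hm : #(zeroSet c) = m) :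
    ∀ x ∈ residualCode C c hm, k ∣ wt x := by
  rintro _ ⟨d, hd, rfl⟩
  have hres : wt (d ∘ (zeroSet c).orderEmbOfFin hm) = #{i | d i ≠ 0 ∧ c i = 0} := by
    rw [wt_comp_orderEmbOfFin, zeroSet, filter_filter]
    simp only [and_comm]
  have hsplit : #{i | d i ≠ 0 ∧ c i = 0} + #{i | d i ≠ 0 ∧ c i ≠ 0} = wt d := by
    rw [wt_eq_card]
    simpa only [filter_filter, ← ne_eq] using
      card_filter_add_card_filter_not (s := univ.filter (d · ≠ 0)) (p := (c · = 0))
  have hoverlap : k ∣ #{i | d i ≠ 0 ∧ c i ≠ 0} := by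
    have hsum := wt_add_add_two_mul_card_inter d c
    have h2 : 2 * k ∣ 2 * #{i | d i ≠ 0 ∧ c i ≠ 0} := (Nat.dvd_add_right
      (hdiv _ (C.add_mem hd hc))).mp (hsum ▸ dvd_add (hdiv d hd) (hdiv c hc))
    exact Nat.dvd_of_mul_dvd_mul_left two_pos h2
  change k ∣ wt (d ∘ (zeroSet c).orderEmbOfFin hm)
  rw [hres]
  exact (Nat.dvd_add_left hoverlap).mp (hsplit ▸ dvd_trans (dvd_mul_left k 2) (hdiv d hd))

end Residual

theorem stmt7 :
    (∀ C : Submodule (ZMod 2) (Fin 9 → ZMod 2),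
      (∀ c ∈ C, 4 ∣ wt c) → ¬ FullLength C) ∧
    (∀ C : Submodule (ZMod 2) (Fin 65 → ZMod 2),
      FullLength C → (∀ c ∈ C, 8 ∣ wt c) → ∀ c ∈ C, wt c ≠ 56) := by
  refine ⟨not_fullLength_nine_of_four_dvd_wt, fun C hC hdiv c hc hc56 => ?_⟩
  have hm : #(zeroSet c) = 9 := by
    have := card_zeroSet_add_wt c
    omega
  exact not_fullLength_nine_of_four_dvd_wt (residualCode C c hm)
    (dvd_wt_of_mem_residualCode (k := 4) hdiv hc hm) (hC.residualCode c hm)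
end

section
/- Let C be an 8-divisible binary [n,12] code of full length with minimum distance ≥ 24 and n ≤ 65. Then C contains at least one codeword of weight 40. (Proof outline: from the power-moment identities, a_40 ≥ (205/2)n² − 6808n − (1/2)n³ + 147420 and a_40 + a_48 ≥ 71n² − (14504/3)n − (1/3)n³ + 106470; for 54 ≤ n ≤ 60 the second bound is negative, a contradiction, and otherwise the first bound forces a_40 ≥ 1.) -/
open Finset

/-!
Write `y_c = n - 2 wt(c) = ∑ᵢ (-1)^{cᵢ}`. Expanding `y_c ^ m` and summing the character
`c ↦ (-1)^{∑ⱼ c(tⱼ)}` over the code shows that `∑_{c ∈ C} y_c ^ m = |C| · T_m`, where `T_m`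
counts the `m`-tuples of coordinates whose indicator vector lies in the dual code. Full length
gives `T₁ = 0`, and `T₂ = n + 2 a₂*` where `a₂*` counts pairs of identical coordinates.

The weights lie in `{0, 24, 32, 40, 48, 56, 64}`. Applying the moments `m ≤ 3` to the cubic that
vanishes at `n - 48, n - 64, n - 96` gives `2 a₄₀ ≥ 294840 - 13616 n + 205 n² - n³`, which is
positive unless `54 ≤ n ≤ 60`. For these seven lengths, `a₄₀ = 0` is incompatible with the moments
`m ≤ 3` and `m = 5` in integers.
-/

section Moments

variable {ι : Type*} [Fintype ι]

lemma AddChar.map_sum_eq_prod {κ A M : Type*} [AddCommMonoid A] [CommMonoid M]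
    (ψ : AddChar A M) (s : Finset κ) (f : κ → A) : ψ (∑ i ∈ s, f i) = ∏ i ∈ s, ψ (f i) :=
  map_prod ψ.toMonoidHom (fun i => Multiplicative.ofAdd (f i)) s

def signChar : AddChar (ZMod 2) ℤ := AddChar.zmodChar 2 (by norm_num : (-1 : ℤ) ^ 2 = 1)

lemma signChar_apply (a : ZMod 2) : signChar a = 1 - 2 * if a = 0 then 0 else 1 := by
  fin_cases a <;> rfl

lemma signChar_eq_one_iff {a : ZMod 2} : signChar a = 1 ↔ a = 0 := by
  rw [signChar_apply]
  split_ifs <;> simp_all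

lemma sum_signChar_comp {A : Type*} [AddGroup A] [Fintype A] (f : A →+ ZMod 2) :
    ∑ a, signChar (f a) = if f = 0 then (Fintype.card A : ℤ) else 0 := by
  have hf : signChar.compAddMonoidHom f = 0 ↔ f = 0 := by
    simp [signChar_eq_one_iff, DFunLike.ext_iff]
  simpa only [hf, AddChar.compAddMonoidHom_apply] using
    AddChar.sum_eq_ite (signChar.compAddMonoidHom f)

lemma card_sub_two_mul_hammingNorm (x : ι → ZMod 2) :
    (Fintype.card ι : ℤ) - 2 * hammingNorm x = ∑ i, signChar (x i) := by
  classical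
  simp [signChar_apply, sum_sub_distrib, sum_ite, hammingNorm, mul_comm]

/-- The `m`-tuples `t` of coordinates with `∑ⱼ e_{tⱼ}` in the dual code of `C`. -/
noncomputable def orthTuples (C : Submodule (ZMod 2) (ι → ZMod 2)) (m : ℕ) :
    Finset (Fin m → ι) :=
  open Classical in {t | ∀ c ∈ C, ∑ j, c (t j) = 0}

variable {C : Submodule (ZMod 2) (ι → ZMod 2)}

lemma mem_orthTuples {m : ℕ} {t : Fin m → ι} :
    t ∈ orthTuples C m ↔ ∀ c ∈ C, ∑ j, c (t j) = 0 := by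
  simp [orthTuples]

lemma card_orthTuples_zero : #(orthTuples C 0) = 1 := by
  rw [card_eq_one]
  exact ⟨finZeroElim, eq_singleton_iff_unique_mem.2
    ⟨mem_orthTuples.2 fun _ _ => by simp, fun t _ => Subsingleton.elim _ _⟩⟩

lemma orthTuples_one_eq_empty (hC : ∀ i, ∃ c ∈ C, c i ≠ 0) : orthTuples C 1 = ∅ := by
  refine eq_empty_of_forall_notMem fun t ht => ?_
  obtain ⟨c, hc, hci⟩ := hC (t 0)
  exact hci (by simpa using mem_orthTuples.1 ht c hc)

variable (C) in
/-- The edges are the weight-2 words `e_i + e_j` of the dual code. -/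
def coordEqGraph : SimpleGraph ι where
  Adj i j := i ≠ j ∧ ∀ c ∈ C, c i = c j
  symm := ⟨fun _ _ h => ⟨h.1.symm, fun c hc => (h.2 c hc).symm⟩⟩
  loopless := ⟨fun _ h => h.1 rfl⟩

lemma card_orthTuples_two [DecidableEq ι] [DecidableRel (coordEqGraph C).Adj] :
    #(orthTuples C 2) = Fintype.card ι + 2 * #(coordEqGraph C).edgeFinset := by
  classical
  have hpair : #(orthTuples C 2) = #{q : ι × ι | ∀ c ∈ C, c q.1 = c q.2} := by
    refine card_equiv (piFinTwoEquiv fun _ => ι) fun t => ?_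
    simp [mem_orthTuples, Fin.sum_univ_two, add_eq_zero_iff_eq_neg, ZMod.neg_eq_self_mod_two]
  rw [hpair, ← card_filter_add_card_filter_not (fun q : ι × ι => q.1 = q.2),
    SimpleGraph.two_mul_card_edgeFinset, filter_filter, filter_filter]
  congr 1
  · rw [← card_univ]
    refine card_nbij' Prod.fst (fun i => (i, i)) ?_ ?_ ?_ ?_ <;> simp
    · exact fun q hq => Prod.ext rfl hq.2
    · exact fun _ _ => rfl
  · exact congrArg card (filter_congr fun q _ => by simp [coordEqGraph, and_comm])

theorem sum_pow_card_sub_two_mul_hammingNorm [Fintype C] (m : ℕ) :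
    ∑ c : C, ((Fintype.card ι : ℤ) - 2 * hammingNorm (c : ι → ZMod 2)) ^ m
      = Fintype.card C * #(orthTuples C m) := by
  classical
  let evalSum (t : Fin m → ι) : C →+ ZMod 2 :=
    { toFun c := ∑ j, (c : ι → ZMod 2) (t j)
      map_zero' := by simp
      map_add' c d := by simp [sum_add_distrib] }
  calc _ = ∑ t : Fin m → ι, ∑ c : C, signChar (evalSum t c) := by
          simp_rw [card_sub_two_mul_hammingNorm, Finset.sum_pow', Fintype.piFinset_univ]
          rw [sum_comm]
          simp [evalSum, AddChar.map_sum_eq_prod]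
    _ = ∑ t : Fin m → ι, if t ∈ orthTuples C m then (Fintype.card C : ℤ) else 0 := by
          refine sum_congr rfl fun t _ => ?_
          rw [sum_signChar_comp]
          congr 1
          simp [mem_orthTuples, DFunLike.ext_iff, evalSum]
    _ = _ := by rw [sum_ite_mem, univ_inter, sum_const, nsmul_eq_mul, mul_comm]

end Moments

section WeightDistribution

variable {n : ℕ} {C : Submodule (ZMod 2) (Fin n → ZMod 2)}

lemma wd_eq_card [Fintype C] (w : ℕ) : wd C w = #{c : C | wt (c : Fin n → ZMod 2) = w} := by
  rw [wd, ← Fintype.card_subtype, ← Nat.card_eq_fintype_card]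
  exact Nat.card_congr (Equiv.subtypeSubtypeEquivSubtypeInter (· ∈ C) (wt · = w)).symm

lemma wd_zero : wd C 0 = 1 :=
  Nat.card_eq_one_iff_exists.2 ⟨⟨0, C.zero_mem, by simp [wt]⟩,
    fun ⟨_, _, h⟩ => Subtype.ext (hammingNorm_eq_zero.1 h)⟩

lemma wd_eq_zero_of_lt {w : ℕ} (hw : n < w) : wd C w = 0 := by
  refine Nat.card_eq_zero.2 (.inl ⟨fun ⟨c, _, hc⟩ => ?_⟩)
  have : wt c ≤ n := hammingNorm_le_card_fintype.trans_eq (Fintype.card_fin n)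
  omega

lemma sum_wt_eq_sum_wd [Fintype C] {S : Finset ℕ} (hS : ∀ c ∈ C, wt c ∈ S) (g : ℕ → ℤ) :
    ∑ c : C, g (wt (c : Fin n → ZMod 2)) = ∑ w ∈ S, (wd C w : ℤ) * g w := by
  rw [← sum_fiberwise_of_maps_to (g := fun c : C => wt (c : Fin n → ZMod 2))
    fun c _ => hS c c.2]
  refine sum_congr rfl fun w _ => ?_
  rw [sum_congr rfl fun c hc => by rw [(mem_filter.1 hc).2], sum_const, wd_eq_card,
    nsmul_eq_mul]

end WeightDistribution

/-- The sum runs over the possible weights of an 8-divisible code of length at most 65 and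
minimum distance at least 24. -/
def weightMoment (n : ℤ) (a : ℕ → ℤ) (m : ℕ) : ℤ :=
  ∑ w ∈ ({0, 24, 32, 40, 48, 56, 64} : Finset ℕ), a w * (n - 2 * w) ^ m

lemma weightMoment_eq (n : ℤ) (a : ℕ → ℤ) (m : ℕ) :
    weightMoment n a m = a 0 * n ^ m + a 24 * (n - 48) ^ m + a 32 * (n - 64) ^ m
      + a 40 * (n - 80) ^ m + a 48 * (n - 96) ^ m + a 56 * (n - 112) ^ m
      + a 64 * (n - 128) ^ m := by
  simp [weightMoment]
  ring

section Arithmetic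

variable {a T : ℕ → ℤ}

/-- The multipliers are the coefficients in `y` of `(y - n + 48)(y - n + 64)(y - n + 96)`,
the cubic vanishing at `y = n - 2w` for `w = 24, 32, 48`. -/
lemma two_mul_a_forty_eq {n : ℤ} (hE : ∀ m, weightMoment n a m = 4096 * T m)
    (ha0 : a 0 = 1) (hT0 : T 0 = 1) (hT1 : T 1 = 0) :
    2 * a 40 = 12 * a 56 + 40 * a 64 + T 3 + (208 - 3 * n) * (T 2 - n)
      + (294840 - 13616 * n + 205 * n ^ 2 - n ^ 3) := by
  have E0 := hE 0
  have E1 := hE 1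
  have E2 := hE 2
  have E3 := hE 3
  simp only [weightMoment_eq, ha0, hT0, hT1] at E0 E1 E2 E3
  refine mul_left_cancel₀ (by norm_num : (4096 : ℤ) ≠ 0) ?_
  linear_combination E3 + (208 - 3 * n) * E2 + (13824 - 416 * n + 3 * n ^ 2) * E1
    + (-n ^ 3 + 208 * n ^ 2 - 13824 * n + 294912) * E0

lemma cubic_pos {n : ℤ} (hn : n ≤ 65) (h : n ≤ 53 ∨ 61 ≤ n) :
    0 < 294840 - 13616 * n + 205 * n ^ 2 - n ^ 3 := by
  rcases h with h | h
  · nlinarith [mul_nonneg (mul_nonneg (sub_nonneg.2 h) (by linarith : (0 : ℤ) ≤ 61 - n))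
      (by linarith : (0 : ℤ) ≤ 90 - n)]
  · nlinarith [mul_nonneg (mul_nonneg (sub_nonneg.2 h) (sub_nonneg.2 hn))
      (by linarith : (0 : ℤ) ≤ 90 - n)]

lemma one_le_a_forty_of_mem_Icc {n : ℕ} (hn : n ∈ Icc 54 60)
    (hE : ∀ m, weightMoment n a m = 4096 * T m) (ha0 : a 0 = 1) (ha40 : 0 ≤ a 40)
    (ha48 : 0 ≤ a 48) (ha56 : 0 ≤ a 56) (hlen : ∀ w, n < w → a w = 0)
    (hT0 : T 0 = 1) (hT1 : T 1 = 0) {p : ℤ} (hp : 0 ≤ p) (hT2 : T 2 = n + 2 * p)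
    (hT3 : 0 ≤ T 3) (hT5 : 0 ≤ T 5) : 1 ≤ a 40 := by
  obtain ⟨h54, h60⟩ := mem_Icc.1 hn
  have E0 := hE 0
  have E1 := hE 1
  have E2 := hE 2
  have E3 := hE 3
  have E5 := hE 5
  simp only [weightMoment_eq, ha0, hT0, hT1, hT2, hlen 64 (by omega)] at E0 E1 E2 E3 E5
  by_cases h55 : n ≤ 55
  · have h56 := hlen 56 (by omega)
    interval_cases n <;> norm_num [h56] at E0 E1 E2 E3 E5 <;> omega
  · interval_cases n <;> norm_num at E0 E1 E2 E3 E5 <;> omega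

lemma one_le_a_forty {n : ℕ} (hn : n ≤ 65) (hE : ∀ m, weightMoment n a m = 4096 * T m)
    (ha0 : a 0 = 1) (ha40 : 0 ≤ a 40) (ha48 : 0 ≤ a 48) (ha56 : 0 ≤ a 56) (ha64 : 0 ≤ a 64)
    (hlen : ∀ w, n < w → a w = 0) (hT0 : T 0 = 1) (hT1 : T 1 = 0) {p : ℤ} (hp : 0 ≤ p)
    (hT2 : T 2 = n + 2 * p) (hT3 : 0 ≤ T 3) (hT5 : 0 ≤ T 5) : 1 ≤ a 40 := by
  by_cases hmid : n ∈ Icc 54 60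
  · exact one_le_a_forty_of_mem_Icc hmid hE ha0 ha40 ha48 ha56 hlen hT0 hT1 hp hT2 hT3 hT5
  have hcubic := cubic_pos (n := n) (by omega) (by simp only [mem_Icc] at hmid; omega)
  have hT2n : 0 ≤ (208 - 3 * (n : ℤ)) * (T 2 - n) := mul_nonneg (by omega) (by omega)
  linarith [two_mul_a_forty_eq hE ha0 hT0 hT1]

end Arithmetic

section Code

variable {n : ℕ} {C : Submodule (ZMod 2) (Fin n → ZMod 2)}

lemma wt_mem_of_dvd (hn : n ≤ 65) (hdiv : ∀ c ∈ C, 8 ∣ wt c)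
    (hd : ∀ c ∈ C, c ≠ 0 → 24 ≤ wt c) (c : Fin n → ZMod 2) (hc : c ∈ C) :
    wt c ∈ ({0, 24, 32, 40, 48, 56, 64} : Finset ℕ) := by
  have hle : wt c ≤ n := hammingNorm_le_card_fintype.trans_eq (Fintype.card_fin n)
  have h8 := hdiv c hc
  rcases eq_or_ne c 0 with rfl | h0
  · simp [wt]
  · have := hd c hc h0
    simp only [mem_insert, mem_singleton]
    omega

lemma weightMoment_wd (hn : n ≤ 65) (hk : Module.finrank (ZMod 2) C = 12)
    (hdiv : ∀ c ∈ C, 8 ∣ wt c) (hd : ∀ c ∈ C, c ≠ 0 → 24 ≤ wt c) (m : ℕ) :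
    weightMoment n (fun w => wd C w) m = 4096 * #(orthTuples C m) := by
  classical
  have hcard : Fintype.card C = 4096 := by
    rw [Module.card_eq_pow_finrank (K := ZMod 2), hk, ZMod.card]
    norm_num
  have hmoment := sum_pow_card_sub_two_mul_hammingNorm (C := C) m
  rw [Fintype.card_fin, hcard, Nat.cast_ofNat] at hmoment
  rw [← hmoment, weightMoment,
    ← sum_wt_eq_sum_wd (wt_mem_of_dvd hn hdiv hd) (fun w => ((n : ℤ) - 2 * w) ^ m)]
  rfl

end Code

theorem stmt9 {n : ℕ} (hn : n ≤ 65) (C : Submodule (ZMod 2) (Fin n → ZMod 2))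
    (hk : Module.finrank (ZMod 2) C = 12) (hfull : FullLength C)
    (hdiv : ∀ c ∈ C, 8 ∣ wt c) (hd : ∀ c ∈ C, c ≠ 0 → 24 ≤ wt c) :
    1 ≤ wd C 40 := by
  classical
  have h := one_le_a_forty hn (weightMoment_wd hn hk hdiv hd) (by simp [wd_zero])
    (by positivity) (by positivity) (by positivity) (by positivity)
    (fun w hw => by simp [wd_eq_zero_of_lt hw]) (by simp [card_orthTuples_zero])
    (by simp [orthTuples_one_eq_empty hfull]) (p := #(coordEqGraph C).edgeFinset)
    (by positivity) (by simp [card_orthTuples_two]) (by positivity) (by positivity)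
  exact_mod_cast h
end
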